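/- arXiv:1604.02742 — 5 statements merged into one kernel-verified Lean document; each statement's English description precedes it below -/
import Mathlib

section
/- Blahut's inner maximization formula: for a fixed channel q(y|x) on finite alphabets, a fixed conditional distribution r(x|y), and a fixed cost function γ: 𝒳 → ℝ with Lagrange multiplier s ≥ 0, the probability mass function π on 𝒳 maximizing F(π) := Σ_{x,y} π(x) q(y|x) log( r(x|y)/π(x) ) − s Σ_x γ(x) π(x) is given by π(x) = exp( Σ_y q(y|x) log r(x|y) − s γ(x) ) / Σ_{x'} exp( Σ_y q(y|x') log r(x'|y) − s γ(x') ), provided r(x|y) > 0 for all x, y. -/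
open Finset

/-- Blahut's inner maximization: with all `r(x|y) > 0`, the pmf
`π(x) = exp(Σ_y q(y|x) log r(x|y) − s γ(x)) / Z` is the unique maximizer of
`F(π') = Σ_{x,y} π'(x) q(y|x) log(r(x|y)/π'(x)) − s Σ_x γ(x) π'(x)`
over the probability simplex. -/
theorem blahut_inner_maximization
    {X Y : Type} [Fintype X] [Fintype Y] [Nonempty X]
    (q : X → Y → ℝ) (r : Y → X → ℝ) (γ : X → ℝ) (s : ℝ)
    (hq0 : ∀ x y, 0 ≤ q x y) (hq1 : ∀ x, ∑ y, q x y = 1)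
    (hr0 : ∀ y x, 0 < r y x) (hr1 : ∀ y, ∑ x, r y x = 1)
    (hs : 0 ≤ s) :
    let F : (X → ℝ) → ℝ := fun π' =>
      (∑ x, ∑ y, π' x * q x y * Real.log (r y x / π' x)) - s * ∑ x, γ x * π' x
    let Z : ℝ := ∑ x', Real.exp ((∑ y, q x' y * Real.log (r y x')) - s * γ x')
    let π : X → ℝ := fun x =>
      Real.exp ((∑ y, q x y * Real.log (r y x)) - s * γ x) / Z
    (∀ x, 0 ≤ π x) ∧ (∑ x, π x = 1) ∧
    (∀ π' : X → ℝ, (∀ x, 0 ≤ π' x) → (∑ x, π' x = 1) → F π' ≤ F π) ∧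
    (∀ π' : X → ℝ, (∀ x, 0 ≤ π' x) → (∑ x, π' x = 1) → F π' = F π → π' = π) := by
  intro F Z π
  set α : X → ℝ := fun x => (∑ y, q x y * Real.log (r y x)) - s * γ x with hα
  have hZpos : 0 < Z := Finset.sum_pos (fun x _ => Real.exp_pos _) Finset.univ_nonempty
  have hπpos : ∀ x, 0 < π x := fun x => div_pos (Real.exp_pos _) hZpos
  have hπsum : ∑ x, π x = 1 := by
    show (∑ x, Real.exp (α x) / Z) = 1
    rw [← Finset.sum_div]
    exact div_self hZpos.ne'
  have hlogπ : ∀ x, Real.log (π x) = α x - Real.log Z := by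
    intro x
    show Real.log (Real.exp (α x) / Z) = _
    rw [Real.log_div (Real.exp_ne_zero _) hZpos.ne', Real.log_exp]
  -- key rewrite of F
  have hF : ∀ π' : X → ℝ, (∀ x, 0 ≤ π' x) →
      F π' = ∑ x, π' x * (α x - Real.log (π' x)) := by
    intro π' h0
    have hx : ∀ x, ∑ y, π' x * q x y * Real.log (r y x / π' x)
        = π' x * ((∑ y, q x y * Real.log (r y x)) - Real.log (π' x)) := by
      intro x
      rcases eq_or_lt_of_le (h0 x) with h | h
      · simp [← h]
      · have hlog : ∀ y, Real.log (r y x / π' x) = Real.log (r y x) - Real.log (π' x) :=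
          fun y => Real.log_div (hr0 y x).ne' h.ne'
        simp only [hlog]
        have : ∑ y, π' x * q x y * (Real.log (r y x) - Real.log (π' x))
            = π' x * ((∑ y, q x y * Real.log (r y x)) - (∑ y, q x y) * Real.log (π' x)) := by
          simp only [mul_sub, Finset.sum_mul, Finset.mul_sum]
          rw [← Finset.sum_sub_distrib]
          exact Finset.sum_congr rfl (fun y _ => by ring)
        rw [this, hq1]
        ring_nf
    show (∑ x, ∑ y, π' x * q x y * Real.log (r y x / π' x)) - s * ∑ x, γ x * π' x = _
    simp only [hx]
    rw [Finset.mul_sum, ← Finset.sum_sub_distrib]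
    exact Finset.sum_congr rfl (fun x _ => by simp only [hα]; ring)
  have hFπ : F π = Real.log Z := by
    rw [hF π (fun x => (hπpos x).le)]
    have : ∀ x, π x * (α x - Real.log (π x)) = π x * Real.log Z := by
      intro x; rw [hlogπ x]; ring
    simp only [this]
    rw [← Finset.sum_mul, hπsum, one_mul]
  -- pointwise Gibbs bound
  have hgibbs : ∀ (π' : X → ℝ), (∀ x, 0 ≤ π' x) → ∀ x,
      π' x * (Real.log (π x) - Real.log (π' x)) ≤ π x - π' x := by
    intro π' h0 x
    rcases eq_or_lt_of_le (h0 x) with h | h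
    · simp [← h, (hπpos x).le]
    · have ht : 0 < π x / π' x := div_pos (hπpos x) h
      have := Real.log_le_sub_one_of_pos ht
      rw [Real.log_div (hπpos x).ne' h.ne'] at this
      have := mul_le_mul_of_nonneg_left this h.le
      calc π' x * (Real.log (π x) - Real.log (π' x)) ≤ π' x * (π x / π' x - 1) := this
        _ = π x - π' x := by field_simp
  have hFdiff : ∀ (π' : X → ℝ), (∀ x, 0 ≤ π' x) → (∑ x, π' x = 1) →
      F π' = (∑ x, π' x * (Real.log (π x) - Real.log (π' x))) + Real.log Z := by
    intro π' h0 h1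
    rw [hF π' h0]
    have : ∀ x, π' x * (α x - Real.log (π' x))
        = π' x * (Real.log (π x) - Real.log (π' x)) + π' x * Real.log Z := by
      intro x; rw [hlogπ x]; ring
    simp only [this]
    rw [Finset.sum_add_distrib, ← Finset.sum_mul, h1, one_mul]
  refine ⟨fun x => (hπpos x).le, hπsum, ?_, ?_⟩
  · intro π' h0 h1
    rw [hFdiff π' h0 h1, hFπ]
    have : ∑ x, π' x * (Real.log (π x) - Real.log (π' x)) ≤ ∑ x, (π x - π' x) :=
      Finset.sum_le_sum (fun x _ => hgibbs π' h0 x)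
    rw [Finset.sum_sub_distrib, hπsum, h1] at this
    linarith
  · intro π' h0 h1 hEq
    rw [hFdiff π' h0 h1, hFπ] at hEq
    have hsum0 : ∑ x, ((π x - π' x) - π' x * (Real.log (π x) - Real.log (π' x))) = 0 := by
      rw [Finset.sum_sub_distrib, Finset.sum_sub_distrib, hπsum, h1]
      linarith
    have hterm0 : ∀ x ∈ Finset.univ,
        (π x - π' x) - π' x * (Real.log (π x) - Real.log (π' x)) = 0 := by
      rw [← Finset.sum_eq_zero_iff_of_nonneg (fun x _ => by linarith [hgibbs π' h0 x])]
      exact hsum0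
    funext x
    have h0x := hterm0 x (Finset.mem_univ x)
    rcases eq_or_lt_of_le (h0 x) with h | h
    · exfalso
      rw [← h] at h0x
      simp at h0x
      exact (hπpos x).ne' h0x
    · have ht : 0 < π x / π' x := div_pos (hπpos x) h
      by_contra hne
      have htne : π x / π' x ≠ 1 := by
        intro hc
        exact hne (by field_simp at hc; linarith)
      have hlt := Real.log_lt_sub_one_of_pos ht htne
      rw [Real.log_div (hπpos x).ne' h.ne'] at hlt
      have := mul_lt_mul_of_pos_left hlt h
      have heq2 : π' x * (π x / π' x - 1) = π x - π' x := by field_simp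
      rw [heq2] at this
      linarith
end

section
/- Contraction property of the BUMCO value-difference recursion: for fixed real constants μ0, μ1 and c, the function f: ℝ → ℝ defined by f(x) = c + log₂( (1 + 2^{μ1 + x}) / (1 + 2^{μ0 + x}) ) is Lipschitz with some constant L < 1 (indeed |f'(x)| = | 2^{μ1+x}/(1+2^{μ1+x}) − 2^{μ0+x}/(1+2^{μ0+x}) | is bounded away from 1 uniformly in x); consequently f has a unique fixed point x* and for any initial value x₀ the iterates x_{k+1} = f(x_k) converge to x*. -/
open Real Filter

/-- Contraction property of the BUMCO value-difference recursion: the map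
`f(x) = c + log₂((1+2^{μ1+x})/(1+2^{μ0+x}))` is Lipschitz with some constant
`L < 1`, hence has a unique fixed point to which all iterates converge. -/
theorem bumco_recursion_contraction (μ0 μ1 c : ℝ) :
    let f : ℝ → ℝ := fun x =>
      c + logb 2 ((1 + (2:ℝ) ^ (μ1 + x)) / (1 + (2:ℝ) ^ (μ0 + x)))
    ∃ L : ℝ, 0 ≤ L ∧ L < 1 ∧ (∀ x y : ℝ, |f x - f y| ≤ L * |x - y|) ∧
      ∃ xs : ℝ, f xs = xs ∧ (∀ y : ℝ, f y = y → y = xs) ∧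
        ∀ x0 : ℝ, Tendsto (fun k => f^[k] x0) atTop (nhds xs) := by
  intro f
  set a := (2:ℝ) ^ (μ1/2) with ha_def
  set b := (2:ℝ) ^ (μ0/2) with hb_def
  have ha : 0 < a := rpow_pos_of_pos two_pos _
  have hb : 0 < b := rpow_pos_of_pos two_pos _
  set L : ℝ := |a - b| / (a + b) with hL_def
  have hL0 : 0 ≤ L := div_nonneg (abs_nonneg _) (by positivity)
  have hL1 : L < 1 := by
    rw [hL_def, div_lt_one (by positivity)]
    rcases abs_cases (a - b) with ⟨h, _⟩ | ⟨h, _⟩ <;> linarith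
  have hlog2 : Real.log 2 ≠ 0 := by
    simpa using Real.log_ne_zero_of_pos_of_ne_one two_pos (by norm_num)
  -- rewrite f
  have hfeq : ∀ x, f x = c + (Real.log (1 + (2:ℝ) ^ (μ1 + x))
      - Real.log (1 + (2:ℝ) ^ (μ0 + x))) / Real.log 2 := by
    intro x
    have h1 : (0:ℝ) < 1 + (2:ℝ) ^ (μ1 + x) := by positivity
    have h0 : (0:ℝ) < 1 + (2:ℝ) ^ (μ0 + x) := by positivity
    rw [show f x = c + logb 2 ((1 + (2:ℝ) ^ (μ1 + x)) / (1 + (2:ℝ) ^ (μ0 + x))) from rfl,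
      Real.logb, Real.log_div h1.ne' h0.ne']
  -- derivative
  set d : ℝ → ℝ := fun x => (2:ℝ) ^ (μ1 + x) / (1 + (2:ℝ) ^ (μ1 + x))
      - (2:ℝ) ^ (μ0 + x) / (1 + (2:ℝ) ^ (μ0 + x)) with hd_def
  have hderiv : ∀ x : ℝ, HasDerivAt f (d x) x := by
    intro x
    have key : ∀ μ : ℝ, HasDerivAt (fun x => Real.log (1 + (2:ℝ) ^ (μ + x)))
        ((2:ℝ) ^ (μ + x) * Real.log 2 / (1 + (2:ℝ) ^ (μ + x))) x := by
      intro μ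
      have h2 : HasDerivAt (fun x : ℝ => (2:ℝ) ^ (μ + x))
          ((2:ℝ) ^ (μ + x) * Real.log 2) x := by
        have base : HasDerivAt (fun t : ℝ => (2:ℝ) ^ t) ((2:ℝ) ^ (μ + x) * Real.log 2)
            (μ + x) := (Real.hasStrictDerivAt_const_rpow two_pos (μ + x)).hasDerivAt
        have inner : HasDerivAt (fun x : ℝ => μ + x) 1 x := (hasDerivAt_id x).const_add μ
        simpa [Function.comp_def] using base.comp x inner
      have hpos : (0:ℝ) < 1 + (2:ℝ) ^ (μ + x) := by positivity
      simpa using (h2.const_add 1).log hpos.ne'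
    have := (((key μ1).sub (key μ0)).div_const (Real.log 2)).const_add c
    have heq : (fun x => c + (Real.log (1 + (2:ℝ) ^ (μ1 + x))
        - Real.log (1 + (2:ℝ) ^ (μ0 + x))) / Real.log 2) = f :=
      funext fun x => (hfeq x).symm
    simp only [Pi.sub_apply] at this; rw [heq] at this
    refine this.congr_deriv ?_
    have h1 : (0:ℝ) < 1 + (2:ℝ) ^ (μ1 + x) := by positivity
    have h0 : (0:ℝ) < 1 + (2:ℝ) ^ (μ0 + x) := by positivity
    rw [hd_def]; field_simp
  -- bound on derivative
  have hbound : ∀ x : ℝ, |d x| ≤ L := by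
    intro x
    set u := (2:ℝ) ^ x with hu_def
    have hu : 0 < u := rpow_pos_of_pos two_pos _
    have ht1 : (2:ℝ) ^ (μ1 + x) = a * a * u := by
      rw [ha_def, hu_def, ← Real.rpow_add two_pos, ← Real.rpow_add two_pos]
      ring_nf
    have ht0 : (2:ℝ) ^ (μ0 + x) = b * b * u := by
      rw [hb_def, hu_def, ← Real.rpow_add two_pos, ← Real.rpow_add two_pos]
      ring_nf
    have h1 : (0:ℝ) < 1 + a * a * u := by positivity
    have h0 : (0:ℝ) < 1 + b * b * u := by positivity
    have hdx : d x = (a * a * u - b * b * u) / ((1 + a * a * u) * (1 + b * b * u)) := by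
      rw [hd_def]; simp only [ht1, ht0]; field_simp; ring
    rw [hdx, hL_def, abs_div, abs_of_pos (by positivity : (0:ℝ) < (1 + a*a*u) * (1 + b*b*u)),
      div_le_div_iff₀ (by positivity) (by positivity)]
    have habs : |a * a * u - b * b * u| = |a - b| * ((a + b) * u) := by
      rw [show a * a * u - b * b * u = (a - b) * ((a + b) * u) by ring, abs_mul,
        abs_of_pos (by positivity : (0:ℝ) < (a + b) * u)]
    rw [habs]
    have key : (a + b) * u * (a + b) ≤ (1 + a * a * u) * (1 + b * b * u) := by
      nlinarith [sq_nonneg (a * b * u - 1), mul_pos ha hb, mul_pos (mul_pos ha hb) hu]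
    nlinarith [abs_nonneg (a - b)]
  -- Lipschitz
  have hlip : ∀ x y : ℝ, |f x - f y| ≤ L * |x - y| := by
    intro x y
    have := Convex.norm_image_sub_le_of_norm_hasDerivWithin_le
      (f := f) (f' := d) (s := Set.univ)
      (fun z _ => (hderiv z).hasDerivWithinAt)
      (fun z _ => by simpa using hbound z) convex_univ (Set.mem_univ y) (Set.mem_univ x)
    simpa [Real.norm_eq_abs] using this
  refine ⟨L, hL0, hL1, hlip, ?_⟩
  -- contraction
  have hK : ContractingWith L.toNNReal f := by
    constructor
    · rwa [← NNReal.coe_lt_coe, NNReal.coe_one, Real.coe_toNNReal _ hL0]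
    · refine LipschitzWith.of_dist_le_mul fun x y => ?_
      simpa [Real.dist_eq, Real.coe_toNNReal _ hL0] using hlip x y
  refine ⟨ContractingWith.fixedPoint f hK, hK.fixedPoint_isFixedPt, ?_, ?_⟩
  · intro y hy
    exact hK.fixedPoint_unique hy
  · intro x0
    exact hK.tendsto_iterate_fixedPoint x0
end

section
/- Closed-form fixed point of the BUMCO steady-state equation: let μ0, μ1, c be real numbers and set ℓ0 = c + μ0 and ℓ1 = c + μ1. Then x := log₂( (2^{ℓ1} − 1) + √( (1 − 2^{ℓ1})² + 2^{ℓ0 + 2} ) ) − μ0 − 1 is well-defined (the argument of log₂ is strictly positive) and satisfies the equation x = c + log₂( (1 + 2^{μ1 + x}) / (1 + 2^{μ0 + x}) ). -/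
open Real

/-- Closed-form fixed point of the BUMCO steady-state equation: with
`ℓ0 = c + μ0`, `ℓ1 = c + μ1`, the number
`x = log₂((2^{ℓ1}−1) + √((1−2^{ℓ1})² + 2^{ℓ0+2})) − μ0 − 1` is well defined
(the argument of `log₂` is strictly positive) and satisfies
`x = c + log₂((1+2^{μ1+x})/(1+2^{μ0+x}))`. -/
theorem bumco_fixed_point_closed_form (μ0 μ1 c : ℝ) :
    let ℓ0 : ℝ := c + μ0
    let ℓ1 : ℝ := c + μ1
    let A : ℝ := ((2:ℝ) ^ ℓ1 - 1) +
      Real.sqrt ((1 - (2:ℝ) ^ ℓ1) ^ 2 + (2:ℝ) ^ (ℓ0 + 2))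
    let x : ℝ := logb 2 A - μ0 - 1
    0 < A ∧
      x = c + logb 2 ((1 + (2:ℝ) ^ (μ1 + x)) / (1 + (2:ℝ) ^ (μ0 + x))) := by
  intro ℓ0 ℓ1 A x
  set a : ℝ := (2:ℝ) ^ ℓ1 with ha_def
  set s : ℝ := Real.sqrt ((1 - a) ^ 2 + (2:ℝ) ^ (ℓ0 + 2)) with hs_def
  have hp : (0:ℝ) < (2:ℝ) ^ (ℓ0 + 2) := rpow_pos_of_pos two_pos _
  have hs0 : 0 ≤ s := Real.sqrt_nonneg _
  have hs2 : s ^ 2 = (1 - a) ^ 2 + (2:ℝ) ^ (ℓ0 + 2) :=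
    Real.sq_sqrt (by positivity)
  have hA : 0 < A := by
    have : A = (a - 1) + s := rfl
    nlinarith [sq_nonneg (s + (1 - a)), sq_nonneg (s - (1 - a))]
  refine ⟨hA, ?_⟩
  have h21 : ((2:ℝ)) ≠ 1 := by norm_num
  set t : ℝ := (2:ℝ) ^ x with ht_def
  have ht : 0 < t := rpow_pos_of_pos two_pos _
  have htA : t * ((2:ℝ) ^ μ0 * 2) = A := by
    have hx : x = logb 2 A - (μ0 + 1) := by simp [x]; ring
    rw [ht_def, hx, rpow_sub two_pos, rpow_logb two_pos h21 hA,
      rpow_add two_pos, rpow_one]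
    field_simp
  have hμ0 : (0:ℝ) < (2:ℝ) ^ μ0 := rpow_pos_of_pos two_pos _
  have hc : (0:ℝ) < (2:ℝ) ^ c := rpow_pos_of_pos two_pos _
  have hℓ0 : (2:ℝ) ^ (ℓ0 + 2) = (2:ℝ) ^ c * (2:ℝ) ^ μ0 * 4 := by
    have : ℓ0 + 2 = c + μ0 + 2 := by simp [ℓ0]
    rw [this, rpow_add two_pos, rpow_add two_pos]
    norm_num
  have hℓ1 : a = (2:ℝ) ^ c * (2:ℝ) ^ μ1 := by
    rw [ha_def]; exact rpow_add two_pos _ _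
  -- the quadratic
  have hq : (2:ℝ) ^ μ0 * t ^ 2 + (1 - a) * t = (2:ℝ) ^ c := by
    have hA2 : A ^ 2 + 2 * (1 - a) * A = 4 * ((2:ℝ) ^ c * (2:ℝ) ^ μ0) := by
      have : A = (a - 1) + s := rfl
      nlinarith [hs2, hℓ0]
    rw [← htA] at hA2
    have h4 : (0:ℝ) < 4 * (2:ℝ) ^ μ0 := by positivity
    nlinarith [hA2]
  -- rewrite the ratio
  have hratio : (1 + (2:ℝ) ^ (μ1 + x)) / (1 + (2:ℝ) ^ (μ0 + x)) =
      (2:ℝ) ^ (x - c) := by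
    have h1 : (2:ℝ) ^ (μ1 + x) = (2:ℝ) ^ μ1 * t := by
      rw [rpow_add two_pos, ← ht_def]
    have h2 : (2:ℝ) ^ (μ0 + x) = (2:ℝ) ^ μ0 * t := by
      rw [rpow_add two_pos, ← ht_def]
    have h3 : (2:ℝ) ^ (x - c) = t / (2:ℝ) ^ c := by
      rw [rpow_sub two_pos, ← ht_def]
    rw [h1, h2, h3]
    have hd : (0:ℝ) < 1 + (2:ℝ) ^ μ0 * t := by positivity
    rw [div_eq_div_iff (by linarith) (ne_of_gt hc)]
    nlinarith [hq, hℓ1]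
  rw [hratio, Real.logb_rpow (by norm_num) h21]
  ring
end

section
/- Stationary distribution of the BEUMCO output chain and the symmetric-case capacity: let α, β, γ ∈ (0,1) and Δ ∈ ℝ, and consider the Markov transition matrix on states {0, e, 1} with columns ν(·|0) = ( α·2^Δ/(1+2^Δ), 1−α, α/(1+2^Δ) ), ν(·|e) = ( γ·2^Δ/(1+2^Δ), 1−γ, γ/(1+2^Δ) ), ν(·|1) = ( β·2^Δ/(1+2^Δ), 1−β, β/(1+2^Δ) ). Then the vector ν(0) = γ 2^Δ / D, ν(e) = (1−β + 2^Δ(1−α)) / D, ν(1) = γ / D, with D = 1 − (β−γ) + 2^Δ(1 − α + γ), is the unique stationary distribution. Moreover, in the special case α = β replaced by 1−a (i.e., parameters (1−a, γ, 1−a)) the fixed point is Δ = 0 and the resulting quantity (1 − ν(e)) log₂(1+2^Δ) − ν(0)·Δ equals γ/(a+γ). -/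
/-- Stationary distribution of the BEUMCO output chain on states `{0, e, 1}`,
its uniqueness, and the symmetric-case capacity formula `γ/(a+γ)`. -/
theorem beumco_stationary_and_symmetric_capacity (α β γ Δ : ℝ)
    (hα : α ∈ Set.Ioo (0:ℝ) 1) (hβ : β ∈ Set.Ioo (0:ℝ) 1)
    (hγ : γ ∈ Set.Ioo (0:ℝ) 1) :
    let T : ℝ := (2:ℝ) ^ Δ
    let D : ℝ := 1 - (β - γ) + T * (1 - α + γ)
    let ν0 : ℝ := γ * T / D
    let νe : ℝ := (1 - β + T * (1 - α)) / D
    let ν1 : ℝ := γ / D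
    (0 ≤ ν0 ∧ 0 ≤ νe ∧ 0 ≤ ν1 ∧ ν0 + νe + ν1 = 1 ∧
      ν0 = (α * T / (1 + T)) * ν0 + (γ * T / (1 + T)) * νe +
        (β * T / (1 + T)) * ν1 ∧
      νe = (1 - α) * ν0 + (1 - γ) * νe + (1 - β) * ν1 ∧
      ν1 = (α / (1 + T)) * ν0 + (γ / (1 + T)) * νe + (β / (1 + T)) * ν1) ∧
    (∀ p0 pe p1 : ℝ, 0 ≤ p0 → 0 ≤ pe → 0 ≤ p1 → p0 + pe + p1 = 1 →
      p0 = (α * T / (1 + T)) * p0 + (γ * T / (1 + T)) * pe +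
        (β * T / (1 + T)) * p1 →
      pe = (1 - α) * p0 + (1 - γ) * pe + (1 - β) * p1 →
      p1 = (α / (1 + T)) * p0 + (γ / (1 + T)) * pe + (β / (1 + T)) * p1 →
      p0 = ν0 ∧ pe = νe ∧ p1 = ν1) ∧
    (∀ a g : ℝ, a ∈ Set.Ioo (0:ℝ) 1 → g ∈ Set.Ioo (0:ℝ) 1 →
      ((0:ℝ) = (((1 - a) - (1 - a)) / (1 - ((1 - a) - g))) *
          Real.logb 2 (1 + (2:ℝ) ^ (0:ℝ))) ∧
      (let D' : ℝ := 1 - ((1 - a) - g) + (2:ℝ) ^ (0:ℝ) * (1 - (1 - a) + g)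
       let ν0' : ℝ := g * (2:ℝ) ^ (0:ℝ) / D'
       let νe' : ℝ := (1 - (1 - a) + (2:ℝ) ^ (0:ℝ) * (1 - (1 - a))) / D'
       (1 - νe') * Real.logb 2 (1 + (2:ℝ) ^ (0:ℝ)) - ν0' * 0
         = g / (a + g))) := by
  obtain ⟨hα0, hα1⟩ := hα
  obtain ⟨hβ0, hβ1⟩ := hβ
  obtain ⟨hγ0, hγ1⟩ := hγ
  intro T D ν0 νe ν1
  have hT : 0 < T := Real.rpow_pos_of_pos two_pos Δ
  have hD : 0 < D := by
    have : 0 < T * (1 - α + γ) := by nlinarith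
    simp only [D]; nlinarith
  have h1T : (0:ℝ) < 1 + T := by linarith
  refine ⟨⟨?_, ?_, ?_, ?_, ?_, ?_, ?_⟩, ?_, ?_⟩
  · exact div_nonneg (mul_nonneg hγ0.le hT.le) hD.le
  · apply div_nonneg _ hD.le; nlinarith
  · exact div_nonneg hγ0.le hD.le
  · have hD' : 1 - (β - γ) + T * (1 - α + γ) ≠ 0 := hD.ne'
    simp only [ν0, νe, ν1, D]; field_simp; ring
  · simp only [ν0, νe, ν1, D]; field_simp; ring
  · simp only [ν0, νe, ν1, D]; field_simp; ring
  · simp only [ν0, νe, ν1, D]; field_simp; ring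
  · intro p0 pe p1 _ _ _ hsum h0 he h1
    have he' : γ * pe = (1 - α) * p0 + (1 - β) * p1 := by linear_combination he
    have h1' : p1 * (1 + T) = α * p0 + γ * pe + β * p1 := by
      have := h1
      field_simp at this
      linear_combination this
    have hA : p0 = T * p1 := by linear_combination -h1' - he'
    have hp1 : p1 * D = γ := by
      simp only [D]
      linear_combination γ * hsum - he' - (1 - α + γ) * hA
    have hp1' : p1 = γ / D := by field_simp; linear_combination hp1
    refine ⟨?_, ?_, hp1'⟩
    · simp only [ν0]; rw [hA, hp1']; ring
    · simp only [νe]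
      have : pe = 1 - p0 - p1 := by linarith
      rw [this, hA, hp1']
      field_simp
      ring
  · intro a g ha hg
    have hag : (0:ℝ) < a + g := by
      have := ha.1; have := hg.1; linarith
    constructor
    · simp
    · intro D' ν0' νe'
      have h2 : ((2:ℝ) ^ (0:ℝ)) = 1 := by norm_num
      have hlog : Real.logb 2 (1 + (2:ℝ) ^ (0:ℝ)) = 1 := by
        rw [h2]; norm_num
      have hlog2 : Real.logb 2 2 = 1 := Real.logb_self_eq_one (by norm_num)
      simp only [νe', ν0', D', h2]
      rw [show (1:ℝ) + 1 = 2 by norm_num, hlog2]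
      have h2ag : a * 2 + g * 2 ≠ 0 := by nlinarith
      field_simp [h2ag]
      linear_combination (-a) * mul_inv_cancel₀ h2ag
end

section
/- BSTMCO symmetry of the optimal solution: for the binary symmetric two-memory channel output channel with parameters α, β, γ, δ ∈ (0,1) (α ≠ β, γ ≠ δ) whose transition probabilities satisfy q(y|y₁,y₂,x) = q(1−y | 1−y₁, 1−y₂, 1−x) for all y, y₁, y₂, x ∈ {0,1}, any solution of the per-stage KKT conditions (equality of the payoffs Σ_y q(y|y₁,y₂,x)[log₂(q(y|y₁,y₂,x)/ν(y|y₁,y₂)) + C(y,y₁)] across x in the support, for each (y₁,y₂)) with value functions satisfying C(y₁,y₂) = C(1−y₁,1−y₂) admits an optimal input distribution with the symmetry π*(x|y₁,y₂) = π*(1−x|1−y₁,1−y₂) and induced output kernel ν(y|y₁,y₂) = ν(1−y|1−y₁,1−y₂) for all x, y, y₁, y₂ ∈ {0,1}. -/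
open Finset

/-- Induced output kernel `ν(y|y₁,y₂) = Σ_x q(y|y₁,y₂,x) π(x|y₁,y₂)`. -/
noncomputable def bstmcoNu (q : Bool → Bool → Bool → Bool → ℝ)
    (π : Bool → Bool → Bool → ℝ) (y y1 y2 : Bool) : ℝ :=
  ∑ x, q y y1 y2 x * π x y1 y2

/-- Per-stage payoff `Σ_y q(y|y₁,y₂,x)[log₂(q(y|y₁,y₂,x)/ν(y|y₁,y₂)) + C(y,y₁)]`. -/
noncomputable def bstmcoPayoff (q : Bool → Bool → Bool → Bool → ℝ)
    (C : Bool → Bool → ℝ) (π : Bool → Bool → Bool → ℝ) (x y1 y2 : Bool) : ℝ :=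
  ∑ y, q y y1 y2 x *
    (Real.logb 2 (q y y1 y2 x / bstmcoNu q π y y1 y2) + C y y1)

/-- Per-stage KKT conditions for the input distribution `π`. -/
def bstmcoKKT (q : Bool → Bool → Bool → Bool → ℝ) (C : Bool → Bool → ℝ)
    (π : Bool → Bool → Bool → ℝ) : Prop :=
  ∃ K : Bool → Bool → ℝ, ∀ y1 y2 x,
    (0 < π x y1 y2 → bstmcoPayoff q C π x y1 y2 = K y1 y2) ∧
    (π x y1 y2 = 0 → bstmcoPayoff q C π x y1 y2 ≤ K y1 y2)

/-- BSTMCO symmetry: for a channel invariant under the simultaneous bit-flip of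
all arguments and a value function invariant under flipping both arguments, if
some input pmf satisfies the per-stage KKT conditions, then there exists an
input pmf satisfying the KKT conditions with the symmetry
`π*(x|y₁,y₂) = π*(1−x|1−y₁,1−y₂)`, whose induced output kernel satisfies
`ν(y|y₁,y₂) = ν(1−y|1−y₁,1−y₂)`. -/
theorem bstmco_symmetric_optimizer
    (q : Bool → Bool → Bool → Bool → ℝ) (C : Bool → Bool → ℝ)
    (hq0 : ∀ y y1 y2 x, 0 ≤ q y y1 y2 x)
    (hq1 : ∀ y1 y2 x, ∑ y, q y y1 y2 x = 1)
    (hqsym : ∀ y y1 y2 x, q y y1 y2 x = q (!y) (!y1) (!y2) (!x))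
    (hCsym : ∀ y1 y2, C y1 y2 = C (!y1) (!y2))
    (π : Bool → Bool → Bool → ℝ)
    (hπ0 : ∀ x y1 y2, 0 ≤ π x y1 y2)
    (hπ1 : ∀ y1 y2, ∑ x, π x y1 y2 = 1)
    (hkkt : bstmcoKKT q C π) :
    ∃ πs : Bool → Bool → Bool → ℝ,
      (∀ x y1 y2, 0 ≤ πs x y1 y2) ∧ (∀ y1 y2, ∑ x, πs x y1 y2 = 1) ∧
      bstmcoKKT q C πs ∧
      (∀ x y1 y2, πs x y1 y2 = πs (!x) (!y1) (!y2)) ∧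
      (∀ y y1 y2, bstmcoNu q πs y y1 y2 = bstmcoNu q πs (!y) (!y1) (!y2)) := by
  obtain ⟨K, hK⟩ := hkkt
  set πs : Bool → Bool → Bool → ℝ :=
    fun x y1 y2 => if y1 then π (!x) (!y1) (!y2) else π x y1 y2 with hπs
  have hnu : ∀ y y1 y2, bstmcoNu q πs y y1 y2 =
      if y1 then bstmcoNu q π (!y) (!y1) (!y2) else bstmcoNu q π y y1 y2 := by
    intro y y1 y2
    cases y1 <;> simp [bstmcoNu, hπs, Fintype.sum_bool]
    rw [hqsym y true y2 true, hqsym y true y2 false]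
    simp only [Bool.not_true, Bool.not_false]
    ring
  have hpay : ∀ x y1 y2, bstmcoPayoff q C πs x y1 y2 =
      if y1 then bstmcoPayoff q C π (!x) (!y1) (!y2) else bstmcoPayoff q C π x y1 y2 := by
    intro x y1 y2
    cases y1
    · simp only [bstmcoPayoff, if_false, Bool.not_false]
      refine Finset.sum_congr rfl fun y _ => ?_
      rw [hnu]
      simp
    · simp only [bstmcoPayoff, if_true, Bool.not_true, Fintype.sum_bool]
      rw [hnu true true y2, hnu false true y2]
      simp only [if_true, Bool.not_true, Bool.not_false]
      rw [hqsym true true y2 x, hqsym false true y2 x, hCsym true true, hCsym false true]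
      simp only [Bool.not_true, Bool.not_false]
      ring
  refine ⟨πs, ?_, ?_, ?_, ?_, ?_⟩
  · intro x y1 y2; cases y1 <;> simp [hπs, hπ0]
  · intro y1 y2
    cases y1
    · have h : ∑ x, πs x false y2 = ∑ x, π x false y2 :=
        Finset.sum_congr rfl fun x _ => rfl
      rw [h, hπ1]
    · simp only [hπs, if_true, Fintype.sum_bool, Bool.not_true, Bool.not_false]
      have := hπ1 false (!y2)
      simp only [Fintype.sum_bool] at this
      linarith
  · refine ⟨fun y1 y2 => if y1 then K (!y1) (!y2) else K y1 y2, ?_⟩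
    intro y1 y2 x
    cases y1
    · rw [hpay]; simpa [hπs] using hK false y2 x
    · rw [hpay]; simpa [hπs] using hK false (!y2) (!x)
  · intro x y1 y2; cases y1 <;> simp [hπs]
  · intro y y1 y2
    cases y1 <;> rw [hnu, hnu] <;> simp
end
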